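/- arXiv:2204.13770 — 6 statements merged into one kernel-verified Lean document; each statement's English description precedes it below -/
import Mathlib

section
/- Let V be a 4-dimensional real vector space with a neutral scalar product g, and let I be a complex structure on V compatible with g. Then for every nonzero null vector X in V there exists a unique linear endomorphism S of V such that S is g-skew-symmetric, S ∘ S = id, I ∘ S = −S ∘ I, and S X = X. -/
/-- A neutral scalar product on a real vector space: a bilinear form admitting a basis
`(e₀,e₁,e₂,e₃)` that is `g`-orthogonal with `g(e₀,e₀)=g(e₁,e₁)=1`, `g(e₂,e₂)=g(e₃,e₃)=-1`
(so in particular the space is 4-dimensional and `g` is symmetric, nondegenerate of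
signature (2,2)). -/
def IsNeutral {V : Type*} [AddCommGroup V] [Module ℝ V]
    (g : V →ₗ[ℝ] V →ₗ[ℝ] ℝ) : Prop :=
  ∃ e : Module.Basis (Fin 4) ℝ V,
    (∀ i j, i ≠ j → g (e i) (e j) = 0) ∧
    g (e 0) (e 0) = 1 ∧ g (e 1) (e 1) = 1 ∧
    g (e 2) (e 2) = -1 ∧ g (e 3) (e 3) = -1

/-- Lemma 4 (Lemma `S`): on a 4-dimensional real vector space with a neutral scalar
product `g` and a compatible complex structure `I`, every nonzero null vector `X`
determines a unique `g`-skew-symmetric endomorphism `S` with `S² = id`, `IS = -SI`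
and `SX = X`. -/
theorem unique_paracomplex_S {V : Type*} [AddCommGroup V] [Module ℝ V]
    (g : V →ₗ[ℝ] V →ₗ[ℝ] ℝ) (hg : IsNeutral g)
    (I : V →ₗ[ℝ] V) (hI : ∀ v, I (I v) = -v)
    (hIg : ∀ u v, g (I u) (I v) = g u v)
    (X : V) (hX : X ≠ 0) (hXnull : g X X = 0) :
    ∃! S : V →ₗ[ℝ] V,
      (∀ u v, g (S u) v = - g u (S v)) ∧
      (∀ v, S (S v) = v) ∧
      (∀ v, I (S v) = - S (I v)) ∧
      S X = X := by
  classical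
  obtain ⟨e, horth, he0, he1, he2, he3⟩ := hg
  haveI := Module.Finite.of_basis e
  have hfr : Fintype.card (Fin 4) = Module.finrank ℝ V := by
    simp [Module.finrank_eq_card_basis e]
  -- symmetry of g
  have gsym : ∀ u v, g u v = g v u := by
    have h : g = g.flip := by
      apply LinearMap.ext_basis e e
      intro i j
      by_cases hij : i = j
      · subst hij; simp
      · simp [LinearMap.flip_apply, horth i j hij, horth j i (Ne.symm hij)]
    intro u v
    conv_lhs => rw [h]
    rfl
  have gdiag : ∀ j : Fin 4, g (e j) (e j) ≠ 0 := by
    intro j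
    fin_cases j <;> simp [he0, he1, he2, he3]
  have gcoord : ∀ (v : V) (j : Fin 4), g v (e j) = e.repr v j * g (e j) (e j) := by
    intro v j
    conv_lhs => rw [← e.sum_repr v]
    rw [map_sum, LinearMap.sum_apply, Finset.sum_eq_single j]
    · simp
    · intro i _ hij; simp [horth i j hij]
    · simp
  -- nondegeneracy of g
  have ndg : ∀ v : V, (∀ w, g v w = 0) → v = 0 := by
    intro v hv
    rw [← e.forall_coord_eq_zero_iff]
    intro j
    have h0 := hv (e j)
    rw [gcoord v j] at h0
    simp only [Module.Basis.coord_apply]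
    exact (mul_eq_zero.mp h0).resolve_right (gdiag j)
  -- g v (I v) = 0
  have hvIv : ∀ v, g v (I v) = 0 := by
    intro v
    have h := hIg v (I v)
    rw [hI v, map_neg] at h
    have h2 := gsym (I v) v
    linarith [h, h2]
  -- construction of Y
  obtain ⟨Y, gXY, gIXY, gYY⟩ : ∃ Y, g X Y = 1 ∧ g (I X) Y = 0 ∧ g Y Y = 0 := by
    obtain ⟨Z0, hZ0⟩ : ∃ Z0, g X Z0 ≠ 0 := by
      by_contra h
      push_neg at h
      exact hX (ndg X h)
    have hIXIZ0 : g (I X) (I Z0) = g X Z0 := hIg X Z0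
    have hXIZ0 : g X (I Z0) = -(g (I X) Z0) := by
      have h := hIg X (I Z0)
      rw [hI Z0, map_neg] at h
      linarith
    obtain ⟨Z, hgXZ, hgIXZ⟩ : ∃ Z, g X Z ≠ 0 ∧ g (I X) Z = 0 := by
      refine ⟨Z0 - (g (I X) Z0 / g X Z0) • I Z0, ?_, ?_⟩
      · simp only [map_sub, map_smul, smul_eq_mul, hXIZ0]
        intro h
        field_simp at h
        apply hZ0
        nlinarith [sq_nonneg (g X Z0), sq_nonneg (g (I X) Z0), h]
      · simp only [map_sub, map_smul, smul_eq_mul, hIXIZ0]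
        field_simp
        ring
    obtain ⟨Z', hXZ', hIXZ'⟩ : ∃ Z', g X Z' = 1 ∧ g (I X) Z' = 0 :=
      ⟨(g X Z)⁻¹ • Z, by simp [map_smul, inv_mul_cancel₀ hgXZ],
        by simp [map_smul, hgIXZ]⟩
    refine ⟨Z' - (g Z' Z' / 2) • X, ?_, ?_, ?_⟩
    · simp [map_sub, map_smul, hXZ', hXnull]
    · have h0 : g (I X) X = 0 := by rw [gsym]; exact hvIv X
      simp [map_sub, map_smul, hIXZ', h0]
    · simp only [map_sub, map_smul, LinearMap.sub_apply, LinearMap.smul_apply, smul_eq_mul]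
      rw [hXnull, hXZ', gsym Z' X, hXZ']
      ring
  -- full Gram data for the family (X, I X, Y, I Y)
  have g12 : g X (I X) = 0 := hvIv X
  have g21 : g (I X) X = 0 := by rw [gsym]; exact g12
  have g22 : g (I X) (I X) = 0 := by rw [hIg]; exact hXnull
  have g31 : g Y X = 1 := by rw [gsym]; exact gXY
  have g32 : g Y (I X) = 0 := by rw [gsym]; exact gIXY
  have g34 : g Y (I Y) = 0 := hvIv Y
  have g43 : g (I Y) Y = 0 := by rw [gsym]; exact g34
  have g44 : g (I Y) (I Y) = 0 := by rw [hIg]; exact gYY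
  have g14 : g X (I Y) = 0 := by
    have h := hIg X (I Y)
    rw [hI Y, map_neg] at h
    rw [← h, gIXY]
    ring
  have g41 : g (I Y) X = 0 := by rw [gsym]; exact g14
  have g24 : g (I X) (I Y) = 1 := by rw [hIg]; exact gXY
  have g42 : g (I Y) (I X) = 1 := by rw [gsym]; exact g24
  -- linear independence of (X, I X, Y, I Y)
  set v : Fin 4 → V := ![X, I X, Y, I Y] with hv
  have li : LinearIndependent ℝ v := by
    rw [Fintype.linearIndependent_iff]
    intro c hc
    rw [Fin.sum_univ_four] at hc
    simp only [hv, Matrix.cons_val_zero, Matrix.cons_val_one, Matrix.head_cons,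
      Matrix.cons_val_two, Matrix.tail_cons, Matrix.cons_val_three] at hc
    have hp : ∀ w, c 0 * g X w + c 1 * g (I X) w + c 2 * g Y w + c 3 * g (I Y) w = 0 := by
      intro w
      have h := congrArg (fun z => g z w) hc
      simpa [map_add, map_smul, LinearMap.add_apply, LinearMap.smul_apply, smul_eq_mul]
        using h
    have h0 := hp Y
    rw [gXY, gIXY, gYY, g43] at h0
    have h1 := hp (I Y)
    rw [g14, g24, g34, g44] at h1
    have h2 := hp X
    rw [hXnull, g21, g31, g41] at h2
    have h3 := hp (I X)
    rw [g12, g22, g32, g42] at h3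
    intro i
    fin_cases i
    · show c 0 = 0; linarith
    · show c 1 = 0; linarith
    · show c 2 = 0; linarith
    · show c 3 = 0; linarith
  set b : Module.Basis (Fin 4) ℝ V := basisOfLinearIndependentOfCardEqFinrank li hfr with hbdef
  have hb : ⇑b = v := coe_basisOfLinearIndependentOfCardEqFinrank li hfr
  have hb0 : b 0 = X := by rw [hb]; rfl
  have hb1 : b 1 = I X := by rw [hb]; rfl
  have hb2 : b 2 = Y := by rw [hb]; rfl
  have hb3 : b 3 = I Y := by rw [hb]; rfl
  set S : V →ₗ[ℝ] V := b.constr ℝ ![X, -(I X), -Y, I Y] with hSdef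
  have hS0 : S X = X := by rw [hSdef, ← hb0]; simp
  have hS1 : S (I X) = -(I X) := by rw [hSdef, ← hb1]; simp
  have hS2 : S Y = -Y := by rw [hSdef, ← hb2]; simp
  have hS3 : S (I Y) = I Y := by rw [hSdef, ← hb3]; simp
  have hskew : ∀ u w, g (S u) w = - g u (S w) := by
    have h : g.comp S = -(g.compl₂ S) := by
      apply LinearMap.ext_basis b b
      intro i j
      simp only [LinearMap.comp_apply, LinearMap.neg_apply, LinearMap.compl₂_apply]
      fin_cases i <;> fin_cases j <;>
        simp [hb0, hb1, hb2, hb3, hS0, hS1, hS2, hS3, hXnull, g12, gXY, g14,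
          g21, g22, gIXY, g24, g31, g32, gYY, g34, g41, g42, g43, g44]
    intro u w
    have h2 := LinearMap.congr_fun (LinearMap.congr_fun h u) w
    simpa using h2
  have hinv : ∀ w, S (S w) = w := by
    have h : S ∘ₗ S = LinearMap.id := by
      apply b.ext
      intro i
      fin_cases i <;>
        simp [hb0, hb1, hb2, hb3, hS0, hS1, hS2, hS3]
    intro w
    have h2 := LinearMap.congr_fun h w
    simpa using h2
  have hanti : ∀ w, I (S w) = - S (I w) := by
    have h : I ∘ₗ S = -(S ∘ₗ I) := by
      apply b.ext
      intro i
      fin_cases i <;>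
        simp [hb0, hb1, hb2, hb3, hS0, hS1, hS2, hS3, hI]
    intro w
    have h2 := LinearMap.congr_fun h w
    simpa using h2
  have huniq : ∀ S' : V →ₗ[ℝ] V,
      ((∀ u w, g (S' u) w = - g u (S' w)) ∧ (∀ w, S' (S' w) = w) ∧
       (∀ w, I (S' w) = - S' (I w)) ∧ S' X = X) → S' = S := by
    rintro S' ⟨u1, u2, u3, u4⟩
    have hS'IX : S' (I X) = -(I X) := by
      have h := u3 X
      rw [u4] at h
      conv_rhs => rw [h, neg_neg]
    have gW1 : g (S' Y) X = -1 := by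
      have h := u1 Y X
      rw [u4, g31] at h
      linarith
    have gW2 : g (S' Y) (I X) = 0 := by
      have h := u1 Y (I X)
      rw [hS'IX] at h
      simp only [map_neg, g32, neg_neg, neg_zero] at h
      exact h
    have gW3 : g (S' Y) Y = 0 := by
      have h := u1 Y Y
      rw [gsym Y (S' Y)] at h
      linarith
    have gW4 : g (S' Y) (I Y) = 0 := by
      have h1 := hIg (S' Y) (I Y)
      rw [hI Y] at h1
      have h2 : I (S' Y) = - S' (I Y) := u3 Y
      rw [h2] at h1
      simp only [map_neg, LinearMap.neg_apply, neg_neg] at h1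
      have h3 := u1 (I Y) Y
      have h4 := gsym (I Y) (S' Y)
      linarith
    have hWY : S' Y + Y = 0 := by
      apply ndg
      intro w
      have hbase : ∀ i : Fin 4, g (S' Y + Y) (b i) = 0 := by
        intro i
        fin_cases i <;>
          simp [hb0, hb1, hb2, hb3, map_add, LinearMap.add_apply, gW1, gW2, gW3, gW4,
            g31, g32, gYY, g34]
      conv_lhs => rw [← b.sum_repr w]
      rw [map_sum]
      refine Finset.sum_eq_zero ?_
      intro i _
      rw [map_smul, smul_eq_mul, hbase i, mul_zero]
    have hS'Y : S' Y = -Y := by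
      rw [eq_neg_iff_add_eq_zero]; exact hWY
    have hS'IY : S' (I Y) = I Y := by
      have h := u3 Y
      rw [hS'Y, map_neg] at h
      exact (neg_injective h).symm
    apply b.ext
    intro i
    fin_cases i <;>
      simp [hb0, hb1, hb2, hb3, hS0, hS1, hS2, hS3, u4, hS'IX, hS'Y, hS'IY]
  exact ⟨S, ⟨hskew, hinv, hanti, hS0⟩, huniq⟩
end

section
/- Let V be a 4-dimensional real vector space with a neutral scalar product g, and let X and Y be null vectors in V that are orthogonal (g(X,Y)=0) and linearly independent. Then there exists a complex structure J on V compatible with g such that J X = Y. -/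
/-- For a nondegenerate symmetric bilinear form on a finite-dimensional space, one can find a
vector with prescribed pairings against any linearly independent family. -/
lemma exists_pairing {V : Type*} [AddCommGroup V] [Module ℝ V] [FiniteDimensional ℝ V]
    (g : V →ₗ[ℝ] V →ₗ[ℝ] ℝ) (hnd : LinearMap.BilinForm.Nondegenerate g)
    (hsymm : ∀ u v, g u v = g v u)
    {n : ℕ} (v : Fin n → V) (hv : LinearIndependent ℝ v) (c : Fin n → ℝ) :
    ∃ w : V, ∀ i, g (v i) w = c i := by
  classical
  let bs : Module.Basis (Fin n) ℝ (Submodule.span ℝ (Set.range v)) := Module.Basis.span hv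
  obtain ⟨f, hf⟩ := LinearMap.exists_extend (bs.constr ℝ c)
  refine ⟨(LinearMap.BilinForm.toDual g hnd).symm f, fun i => ?_⟩
  rw [hsymm]
  have h1 : g ((LinearMap.BilinForm.toDual g hnd).symm f) (v i) = f (v i) :=
    LinearMap.BilinForm.apply_toDual_symm_apply f (v i)
  rw [h1]
  have h3 : ((bs i : Submodule.span ℝ (Set.range v)) : V) = v i := congrArg Subtype.val (Module.Basis.span_apply hv i)
  rw [← h3]
  have h := LinearMap.congr_fun hf (bs i)
  rw [LinearMap.comp_apply, Submodule.subtype_apply, Module.Basis.constr_basis] at h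
  exact h

/-- Lemma 3 (Lemma `ACS J`, pointwise version): given two orthogonal, linearly
independent null vectors `X, Y` in a 4-dimensional real vector space with a neutral
scalar product `g`, there is a `g`-compatible complex structure `J` with `J X = Y`. -/
theorem exists_compatible_complex_structure {V : Type*} [AddCommGroup V] [Module ℝ V]
    (g : V →ₗ[ℝ] V →ₗ[ℝ] ℝ) (hg : IsNeutral g)
    (X Y : V) (hXnull : g X X = 0) (hYnull : g Y Y = 0) (hXY : g X Y = 0)
    (hind : LinearIndependent ℝ ![X, Y]) :
    ∃ J : V →ₗ[ℝ] V,
      (∀ v, J (J v) = -v) ∧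
      (∀ u v, g (J u) (J v) = g u v) ∧
      J X = Y := by
  classical
  obtain ⟨e, horth, h0, h1, h2, h3⟩ := hg
  haveI : FiniteDimensional ℝ V := Module.Finite.of_basis e
  -- symmetry of g
  have hflip : g = g.flip := by
    apply e.ext; intro i; apply e.ext; intro j
    rcases eq_or_ne i j with rfl | hij
    · rfl
    · simp [LinearMap.flip_apply, horth i j hij, horth j i hij.symm]
  have hsymm : ∀ u v, g u v = g v u := by
    intro u v
    conv_lhs => rw [hflip]
    rfl
  -- nondegeneracy of g
  have hdiag : ∀ i, g (e i) (e i) ≠ 0 := by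
    intro i
    fin_cases i <;> simp [h0, h1, h2, h3]
  have hnd : LinearMap.BilinForm.Nondegenerate g := by
    refine (LinearMap.IsRefl.nondegenerate_iff_separatingLeft
      (fun x y h => by rw [hsymm]; exact h)).mpr ?_
    intro m hm
    rw [← Module.Basis.forall_coord_eq_zero_iff e]
    intro i
    have hmi : g (e i) m = 0 := by rw [hsymm]; exact hm (e i)
    have hr : g (e i) m = g (e i) (e i) * e.repr m i := by
      conv_lhs => rw [← e.sum_repr m]
      rw [map_sum, Finset.sum_eq_single i]
      · rw [map_smul]; simp [mul_comm]
      · intro j _ hj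
        rw [map_smul, horth i j hj.symm]
        simp
      · simp
    have : g (e i) (e i) * e.repr m i = 0 := by rw [← hr]; exact hmi
    rcases mul_eq_zero.mp this with h | h
    · exact absurd h (hdiag i)
    · simpa [Module.Basis.coord_apply] using h
  have hYX : g Y X = 0 := by rw [hsymm]; exact hXY
  -- extract independence of the pair
  have hindXY : ∀ a b : ℝ, a • X + b • Y = 0 → a = 0 ∧ b = 0 := by
    intro a b hab
    have h := Fintype.linearIndependent_iff.mp hind ![a, b] (by
      simpa [Fin.sum_univ_two] using hab)
    exact ⟨h 0, h 1⟩
  -- find A with g X A = 1, g Y A = 0, g A A = 0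
  obtain ⟨X', hX'⟩ := exists_pairing g hnd hsymm ![X, Y] hind ![1, 0]
  have hXX' : g X X' = 1 := by simpa using hX' 0
  have hYX' : g Y X' = 0 := by simpa using hX' 1
  have hX'X : g X' X = 1 := by rw [hsymm]; exact hXX'
  set q : ℝ := g X' X' with hq
  set A : V := X' - (q / 2) • X with hAdef
  have hXA : g X A = 1 := by
    simp [hAdef, map_sub, map_smul, hXnull, hXX']
  have hYA : g Y A = 0 := by
    simp [hAdef, map_sub, map_smul, hYX', hYX]
  have hAA : g A A = 0 := by
    simp only [hAdef, map_sub, map_smul, LinearMap.sub_apply, LinearMap.smul_apply,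
      smul_eq_mul, hXnull, hXX', hX'X, ← hq]
    ring
  have hAX : g A X = 1 := by rw [hsymm]; exact hXA
  have hAY : g A Y = 0 := by rw [hsymm]; exact hYA
  -- independence of X, Y, A
  have hindXYA : LinearIndependent ℝ ![X, Y, A] := by
    rw [Fintype.linearIndependent_iff]
    intro s hs
    have hsum : s 0 • X + s 1 • Y + s 2 • A = 0 := by
      simpa [Fin.sum_univ_three] using hs
    have hs2 : s 2 = 0 := by
      have := congrArg (g X) hsum
      simpa [map_add, map_smul, hXnull, hXY, hXA] using this
    have h01 := hindXY (s 0) (s 1) (by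
      have := hsum
      rw [hs2] at this
      simpa using this)
    intro i
    fin_cases i
    · exact h01.1
    · exact h01.2
    · exact hs2
  -- find B with g X B = 0, g Y B = 1, g A B = 0, g B B = 0
  obtain ⟨Y', hY'⟩ := exists_pairing g hnd hsymm ![X, Y, A] hindXYA ![0, 1, 0]
  have hXY'2 : g X Y' = 0 := by simpa using hY' 0
  have hYY' : g Y Y' = 1 := by simpa using hY' 1
  have hAY' : g A Y' = 0 := by simpa using hY' 2
  have hY'Y : g Y' Y = 1 := by rw [hsymm]; exact hYY'
  set r : ℝ := g Y' Y' with hr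
  set B : V := Y' - (r / 2) • Y with hBdef
  have hXB : g X B = 0 := by
    simp [hBdef, map_sub, map_smul, hXY'2, hXY]
  have hYB : g Y B = 1 := by
    simp [hBdef, map_sub, map_smul, hYnull, hYY']
  have hAB : g A B = 0 := by
    simp [hBdef, map_sub, map_smul, hAY', hAY]
  have hBB : g B B = 0 := by
    simp only [hBdef, map_sub, map_smul, LinearMap.sub_apply, LinearMap.smul_apply,
      smul_eq_mul, hYnull, hYY', hY'Y, ← hr]
    ring
  have hBX : g B X = 0 := by rw [hsymm]; exact hXB
  have hBY : g B Y = 1 := by rw [hsymm]; exact hYB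
  have hBA : g B A = 0 := by rw [hsymm]; exact hAB
  -- X, Y, A, B form a basis
  have hindfull : LinearIndependent ℝ ![X, Y, A, B] := by
    rw [Fintype.linearIndependent_iff]
    intro s hs
    have hsum : s 0 • X + s 1 • Y + s 2 • A + s 3 • B = 0 := by
      simpa [Fin.sum_univ_four] using hs
    have e0 : s 0 = 0 := by
      have := congrArg (g A) hsum
      simpa [map_add, map_smul, hAX, hAY, hAA, hAB] using this
    have e1 : s 1 = 0 := by
      have := congrArg (g B) hsum
      simpa [map_add, map_smul, hBX, hBY, hBA, hBB] using this
    have e2 : s 2 = 0 := by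
      have := congrArg (g X) hsum
      simpa [map_add, map_smul, hXnull, hXY, hXA, hXB] using this
    have e3 : s 3 = 0 := by
      have := congrArg (g Y) hsum
      simpa [map_add, map_smul, hYX, hYnull, hYA, hYB] using this
    intro i
    fin_cases i
    · exact e0
    · exact e1
    · exact e2
    · exact e3
  have hcard : Fintype.card (Fin 4) = Module.finrank ℝ V := by
    rw [Module.finrank_eq_card_basis e]
  let b : Module.Basis (Fin 4) ℝ V := basisOfLinearIndependentOfCardEqFinrank hindfull hcard
  have hb : ⇑b = ![X, Y, A, B] :=
    coe_basisOfLinearIndependentOfCardEqFinrank hindfull hcard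
  -- define J on the basis
  let J : V →ₗ[ℝ] V := b.constr ℝ ![Y, -X, B, -A]
  have hJn : ∀ i : Fin 4, J (![X, Y, A, B] i) = ![Y, -X, B, -A] i := by
    intro i
    rw [← hb]
    exact b.constr_basis ℝ _ i
  have hJX : J X = Y := by simpa using hJn 0
  have hJY : J Y = -X := by simpa using hJn 1
  have hJA : J A = B := by simpa using hJn 2
  have hJB : J B = -A := by simpa using hJn 3
  have hbi : ∀ i : Fin 4, b i = ![X, Y, A, B] i := fun i => congrFun hb i
  -- J ∘ J = -id
  have hJJlin : J ∘ₗ J = -LinearMap.id := by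
    apply b.ext
    intro i
    fin_cases i <;>
      simp [hbi, LinearMap.comp_apply, hJX, hJY, hJA, hJB, map_neg]
  -- compatibility
  have hcomp : g.compl₁₂ J J = g := by
    apply b.ext; intro i; apply b.ext; intro j
    fin_cases i <;> fin_cases j <;>
      simp [hbi, LinearMap.compl₁₂_apply, hJX, hJY, hJA, hJB, map_neg, LinearMap.neg_apply,
        hXnull, hYnull, hAA, hBB, hXY, hYX, hXA, hAX, hYA, hAY, hXB, hBX, hYB, hBY, hAB, hBA]
  refine ⟨J, ?_, ?_, hJX⟩
  · intro v
    have := LinearMap.congr_fun hJJlin v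
    simpa using this
  · intro u v
    have := LinearMap.congr_fun (LinearMap.congr_fun hcomp u) v
    simpa [LinearMap.compl₁₂_apply] using this
end

section
/- Let V be a 4-dimensional real vector space with a neutral scalar product g, let I be a complex structure on V compatible with g, and let X be a nonzero null vector in V. Then there exists a vector U ∈ V such that g(U,U)=0, g(X,U)=0, g(IX,U)=2, and the four vectors X, IX, U, IU are linearly independent (hence form a basis of V). -/
/-- For a nonzero null vector `X` in a 4-dimensional real vector space with a neutral
scalar product `g` and compatible complex structure `I`, there is a null vector `U`
orthogonal to `X` with `g(IX,U) = 2` such that `X, IX, U, IU` are linearly independent. -/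
theorem exists_null_U {V : Type*} [AddCommGroup V] [Module ℝ V]
    (g : V →ₗ[ℝ] V →ₗ[ℝ] ℝ) (hg : IsNeutral g)
    (I : V →ₗ[ℝ] V) (hI : ∀ v, I (I v) = -v)
    (hIg : ∀ u v, g (I u) (I v) = g u v)
    (X : V) (hX : X ≠ 0) (hXnull : g X X = 0) :
    ∃ U : V,
      g U U = 0 ∧
      g X U = 0 ∧
      g (I X) U = 2 ∧
      LinearIndependent ℝ ![X, I X, U, I U] := by
  obtain ⟨e, horth, h0, h1, h2, h3⟩ := hg
  -- symmetry
  have hsym : ∀ u v, g u v = g v u := by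
    have hflip : g = g.flip := by
      apply e.ext; intro i; apply e.ext; intro j
      rcases eq_or_ne i j with rfl | h
      · rfl
      · rw [LinearMap.flip_apply, horth i j h, horth j i h.symm]
    intro u v
    conv_lhs => rw [hflip]
    rfl
  have hdiag : ∀ i : Fin 4, g (e i) (e i) ≠ 0 := by
    intro i; fin_cases i <;> simp [h0, h1, h2, h3]
  -- nondegeneracy
  have hnd : ∀ v : V, g v = 0 → v = 0 := by
    intro v hv
    have hrepr : ∀ i, e.repr v i = 0 := by
      intro i
      have hz : g v (e i) = 0 := by rw [hv]; rfl
      have hcalc : g v (e i) = ∑ j, e.repr v j * g (e j) (e i) := by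
        conv_lhs => rw [← e.sum_repr v]
        simp [map_sum, -Module.Basis.sum_repr]
      rw [Finset.sum_eq_single i (fun j _ hj => by rw [horth j i hj, mul_zero])
        (by simp)] at hcalc
      rw [hz] at hcalc
      exact (mul_eq_zero.mp hcalc.symm).resolve_right (hdiag i)
    have : e.repr v = 0 := Finsupp.ext fun i => by simp [hrepr i]
    simpa using congrArg e.repr.symm this
  -- g X (I X) = 0
  have hXIX0 : g X (I X) = 0 := by
    have h := hIg X (I X)
    rw [hI X] at h
    rw [map_neg, hsym (I X) X] at h
    linarith
  -- exists W0 with g X W0 = 0 and g (I X) W0 ≠ 0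
  have hexW : ∃ W, g X W = 0 ∧ g (I X) W ≠ 0 := by
    by_contra hc
    push_neg at hc
    have hker : ⨅ (_ : Unit), LinearMap.ker (g X) ≤ LinearMap.ker (g (I X)) := by
      intro w hw
      simp only [Submodule.mem_iInf, LinearMap.mem_ker] at hw ⊢
      exact hc w (hw ())
    have hmem := mem_span_of_iInf_ker_le_ker hker
    rw [Set.range_const, Submodule.mem_span_singleton] at hmem
    obtain ⟨c, hc'⟩ := hmem
    have hz : g (I X - c • X) = 0 := by
      rw [map_sub, map_smul, hc', sub_self]
    have hIXc : I X = c • X := by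
      have := hnd _ hz; rwa [sub_eq_zero] at this
    have : -X = (c * c) • X := by
      rw [← hI X, hIXc, map_smul, hIXc, smul_smul]
    have hzero : (c * c + 1) • X = 0 := by
      rw [add_smul, one_smul, ← this]; abel
    have : X = 0 := by
      rcases smul_eq_zero.mp hzero with h | h
      · nlinarith
      · exact h
    exact hX this
  obtain ⟨W0, hW0X, hW0IX⟩ := hexW
  set W : V := (2 / g (I X) W0) • W0 with hWdef
  have hXW : g X W = 0 := by rw [hWdef, map_smul, smul_eq_mul, hW0X, mul_zero]
  have hIXW : g (I X) W = 2 := by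
    rw [hWdef, map_smul, smul_eq_mul]
    field_simp
  have hIXIX : g (I X) (I X) = 0 := by rw [hIg, hXnull]
  set t : ℝ := -(g W W) / 4 with ht
  set U : V := W + t • I X with hUdef
  have hWIX : g W (I X) = 2 := by rw [hsym, hIXW]
  have hUU : g U U = 0 := by
    rw [hUdef]
    simp only [map_add, map_smul, LinearMap.add_apply, LinearMap.smul_apply, smul_eq_mul]
    rw [hWIX, hIXW, hIXIX, ht]; ring
  have hXU : g X U = 0 := by
    rw [hUdef]
    simp only [map_add, map_smul, smul_eq_mul]
    rw [hXW, hXIX0]; ring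
  have hIXU : g (I X) U = 2 := by
    rw [hUdef]
    simp only [map_add, map_smul, smul_eq_mul]
    rw [hIXW, hIXIX]; ring
  -- the remaining Gram entries
  have hXIU : g X (I U) = -2 := by
    have h := hIg (I X) U
    rw [hI X, map_neg, LinearMap.neg_apply, hIXU] at h
    linarith
  have hIXIU : g (I X) (I U) = 0 := by rw [hIg, hXU]
  have hUIU : g U (I U) = 0 := by
    have h := hIg U (I U)
    rw [hI U, map_neg, hsym (I U) U] at h
    linarith [h]
  have hIUIU : g (I U) (I U) = 0 := by rw [hIg, hUU]
  have hIXX : g (I X) X = 0 := by rw [hsym, hXIX0]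
  have hUX : g U X = 0 := by rw [hsym, hXU]
  have hUIX : g U (I X) = 2 := by rw [hsym, hIXU]
  have hIUX : g (I U) X = -2 := by rw [hsym, hXIU]
  have hIUIX : g (I U) (I X) = 0 := by rw [hsym, hIXIU]
  have hIUU : g (I U) U = 0 := by rw [hsym, hUIU]
  refine ⟨U, hUU, hXU, hIXU, ?_⟩
  rw [Fintype.linearIndependent_iff]
  intro c hc
  have hsum : c 0 • X + c 1 • I X + c 2 • U + c 3 • I U = 0 := by
    have := hc
    simpa [Fin.sum_univ_four] using this
  have e0 := congrArg (g X) hsum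
  have e1 := congrArg (g (I X)) hsum
  have e2 := congrArg (g U) hsum
  have e3 := congrArg (g (I U)) hsum
  simp only [map_add, map_smul, smul_eq_mul, map_zero,
    hXnull, hXIX0, hXU, hXIU, hIXX, hIXIX, hIXU, hIXIU,
    hUX, hUIX, hUU, hUIU, hIUX, hIUIX, hIUU, hIUIU] at e0 e1 e2 e3
  have hc0 : c 0 = 0 := by linarith
  have hc1 : c 1 = 0 := by linarith
  have hc2 : c 2 = 0 := by linarith
  have hc3 : c 3 = 0 := by linarith
  intro i
  fin_cases i
  · exact hc0
  · exact hc1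
  · exact hc2
  · exact hc3
end

section
/- Let V be a 4-dimensional real vector space with a neutral scalar product g, let I be a complex structure on V compatible with g, let X ∈ V be a nonzero null vector, and let U ∈ V be a null vector with g(X,U)=0 and g(IX,U)=2. If S is a g-skew-symmetric endomorphism of V with S ∘ S = id, I ∘ S = −S ∘ I and S X = X, then S u = u for every u ∈ span{X,U} and S u = −u for every u ∈ span{IX,IU}; i.e., the (+1)-eigenspace of S is span{X,U} and the (−1)-eigenspace of S is span{IX,IU}. -/
namespace IsNeutral

variable {V : Type*} [AddCommGroup V] [Module ℝ V] {g : V →ₗ[ℝ] V →ₗ[ℝ] ℝ}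

theorem isSymm (hg : IsNeutral g) : LinearMap.BilinForm.IsSymm g := by
  obtain ⟨e, horth, -⟩ := hg
  have hflip : g = g.flip := LinearMap.ext_basis e e fun i j => by
    rcases eq_or_ne i j with rfl | hij
    · rfl
    · simp [horth i j hij, horth j i hij.symm]
  exact ⟨fun u v => congr($hflip u v)⟩

theorem separatingLeft (hg : IsNeutral g) : g.SeparatingLeft := by
  obtain ⟨e, horth, h0, h1, h2, h3⟩ := hg
  refine LinearMap.IsOrthoᵢ.separatingLeft_of_not_isOrtho_basis_self e
    (fun i j hij => horth i j hij) fun i => ?_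
  fin_cases i <;> simp [h0, h1, h2, h3]

theorem finrank_eq_four (hg : IsNeutral g) : Module.finrank ℝ V = 4 := by
  obtain ⟨e, -⟩ := hg
  simp [Module.finrank_eq_card_basis e]

end IsNeutral

theorem LinearMap.SeparatingLeft.eq_zero_of_span_eq_top {R M N P : Type*} [CommSemiring R]
    [AddCommMonoid M] [AddCommMonoid N] [AddCommMonoid P] [Module R M] [Module R N] [Module R P]
    {B : M →ₗ[R] N →ₗ[R] P} (hB : B.SeparatingLeft) {s : Set N}
    (hs : Submodule.span R s = ⊤) {x : M} (hx : ∀ y ∈ s, B x y = 0) : x = 0 :=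
  hB x fun _ => (Submodule.span_le (p := LinearMap.ker (B x))).2 hx (hs ▸ Submodule.mem_top)

theorem LinearMap.ker_sub_id_eq_and_ker_add_id_eq {K V : Type*} [DivisionRing K] [CharZero K]
    [AddCommGroup V] [Module K V] {S : V →ₗ[K] V} {P Q : Submodule K V}
    (hP : P ≤ LinearMap.ker (S - LinearMap.id)) (hQ : Q ≤ LinearMap.ker (S + LinearMap.id))
    (hPQ : P ⊔ Q = ⊤) :
    LinearMap.ker (S - LinearMap.id) = P ∧ LinearMap.ker (S + LinearMap.id) = Q := by
  have hSp : ∀ p ∈ P, S p = p := fun p hp => sub_eq_zero.1 (hP hp)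
  have hSq : ∀ q ∈ Q, S q = -q := fun q hq => eq_neg_of_add_eq_zero_left (hQ hq)
  have hdecomp : ∀ v : V, ∃ p ∈ P, ∃ q ∈ Q, p + q = v := fun v =>
    Submodule.mem_sup.1 (hPQ ▸ Submodule.mem_top)
  refine ⟨le_antisymm (fun v hv => ?_) hP, le_antisymm (fun v hv => ?_) hQ⟩
  · obtain ⟨p, hp, q, hq, rfl⟩ := hdecomp v
    have : (2 : K) • q = 0 := by
      rw [LinearMap.mem_ker] at hv
      simp only [LinearMap.sub_apply, map_add, hSp p hp, hSq q hq, LinearMap.id_apply] at hv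
      rw [two_smul, ← neg_eq_zero, ← hv]; abel
    simpa [(smul_eq_zero.1 this).resolve_left two_ne_zero] using hp
  · obtain ⟨p, hp, q, hq, rfl⟩ := hdecomp v
    have : (2 : K) • p = 0 := by
      rw [LinearMap.mem_ker] at hv
      simp only [LinearMap.add_apply, map_add, hSp p hp, hSq q hq, LinearMap.id_apply] at hv
      rw [two_smul, ← hv]; abel
    simpa [(smul_eq_zero.1 this).resolve_left two_ne_zero] using hq

theorem LinearMap.apply_map_eq_neg_of_apply_eq_self {R M : Type*} [Ring R] [AddCommGroup M]
    [Module R M] {I S : M →ₗ[R] M} (hSanti : ∀ v, I (S v) = -S (I v)) {v : M} (hv : S v = v) :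
    S (I v) = -I v := by
  calc S (I v) = -I (S v) := by rw [hSanti, neg_neg]
    _ = -I v := by rw [hv]

section NullFrame

variable {V : Type*} [AddCommGroup V] [Module ℝ V] {g : V →ₗ[ℝ] V →ₗ[ℝ] ℝ} {I : V →ₗ[ℝ] V}

theorem apply_map_left_eq_neg (hI : ∀ v, I (I v) = -v) (hIg : ∀ u v, g (I u) (I v) = g u v)
    (u v : V) : g (I u) v = -g u (I v) := by
  rw [← hIg u (I v), hI, map_neg, neg_neg]

theorem apply_map_self_eq_zero (hsym : LinearMap.BilinForm.IsSymm g) (hI : ∀ v, I (I v) = -v)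
    (hIg : ∀ u v, g (I u) (I v) = g u v) (u : V) : g u (I u) = 0 := by
  linarith [apply_map_left_eq_neg hI hIg u u, hsym.eq (I u) u]

theorem linearIndependent_null_frame (hsym : LinearMap.BilinForm.IsSymm g)
    (hI : ∀ v, I (I v) = -v) (hIg : ∀ u v, g (I u) (I v) = g u v) {X U : V}
    (hXnull : g X X = 0) (hUnull : g U U = 0) (hXU : g X U = 0) (hIXU : g (I X) U = 2) :
    LinearIndependent ℝ ![X, U, I X, I U] := by
  have hskew := apply_map_left_eq_neg hI hIg
  have hself := apply_map_self_eq_zero hsym hI hIg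
  have hUX : g U X = 0 := by rw [hsym.eq, hXU]
  have hUIX : g U (I X) = 2 := by rw [hsym.eq, hIXU]
  have hXIU : g X (I U) = -2 := by rw [← neg_neg (g X (I U)), ← hskew, hIXU]
  rw [Fintype.linearIndependent_iff]
  intro c hc
  have pair : ∀ w, c 0 * g X w + c 1 * g U w + c 2 * g (I X) w + c 3 * g (I U) w = 0 :=
    fun w => by simpa [Fin.sum_univ_four] using congr(g $hc w)
  have h0 := pair (I U)
  have h1 := pair (I X)
  have h2 := pair U
  have h3 := pair X
  simp only [hskew, hI, map_neg, neg_neg, hself, hXnull, hUnull, hXU, hUX, hUIX, hXIU]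
    at h0 h1 h2 h3
  intro i
  fin_cases i <;> simp <;> linarith

theorem span_null_frame_eq_top (hdim : Module.finrank ℝ V = 4)
    (hsym : LinearMap.BilinForm.IsSymm g)
    (hI : ∀ v, I (I v) = -v) (hIg : ∀ u v, g (I u) (I v) = g u v) {X U : V}
    (hXnull : g X X = 0) (hUnull : g U U = 0) (hXU : g X U = 0) (hIXU : g (I X) U = 2) :
    Submodule.span ℝ {X, U, I X, I U} = ⊤ := by
  have := (linearIndependent_null_frame hsym hI hIg hXnull hUnull hXU hIXU
    ).span_eq_top_of_card_eq_finrank (by simp [hdim])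
  simpa only [Matrix.range_cons, Matrix.range_empty, Set.union_empty, Set.singleton_union]
    using this

theorem apply_eq_self_of_skew_of_anticomm (hsep : g.SeparatingLeft)
    (hsym : LinearMap.BilinForm.IsSymm g) (hI : ∀ v, I (I v) = -v)
    (hIg : ∀ u v, g (I u) (I v) = g u v) {X U : V}
    (hspan : Submodule.span ℝ {X, U, I X, I U} = ⊤) (hUnull : g U U = 0) (hXU : g X U = 0)
    {S : V →ₗ[ℝ] V} (hSskew : ∀ u v, g (S u) v = -g u (S v))
    (hSanti : ∀ v, I (S v) = -S (I v)) (hSX : S X = X) : S U = U := by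
  have hSIU : S (I U) = -I (S U) := by rw [← neg_neg (S (I U)), ← hSanti]
  refine sub_eq_zero.1 (hsep.eq_zero_of_span_eq_top hspan ?_)
  simp only [Set.mem_insert_iff, Set.mem_singleton_iff, forall_eq_or_imp, forall_eq]
  refine ⟨?_, ?_, ?_, ?_⟩ <;> rw [map_sub, LinearMap.sub_apply, sub_eq_zero]
  · rw [hSskew, hSX]
    linarith [hsym.eq U X]
  · linarith [hSskew U U, hsym.eq U (S U)]
  · rw [hSskew, LinearMap.apply_map_eq_neg_of_apply_eq_self hSanti hSX, map_neg, neg_neg]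
  · have h := hSskew U (I U)
    rw [hSIU, map_neg, neg_neg] at h
    rw [apply_map_self_eq_zero hsym hI hIg]
    linarith [apply_map_left_eq_neg hI hIg U (S U), hsym.eq (I U) (S U)]

end NullFrame

theorem eigenspaces_of_S_are_spans_general {V : Type*} [AddCommGroup V] [Module ℝ V]
    (g : V →ₗ[ℝ] V →ₗ[ℝ] ℝ) (hg : IsNeutral g)
    (I : V →ₗ[ℝ] V) (hI : ∀ v, I (I v) = -v)
    (hIg : ∀ u v, g (I u) (I v) = g u v)
    (X : V) (hXnull : g X X = 0)
    (U : V) (hUnull : g U U = 0) (hXU : g X U = 0) (hIXU : g (I X) U = 2)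
    (S : V →ₗ[ℝ] V)
    (hSskew : ∀ u v, g (S u) v = - g u (S v))
    (hSanti : ∀ v, I (S v) = - S (I v))
    (hSX : S X = X) :
    (∀ u ∈ Submodule.span ℝ {X, U}, S u = u) ∧
    (∀ u ∈ Submodule.span ℝ {I X, I U}, S u = -u) ∧
    LinearMap.ker (S - LinearMap.id) = Submodule.span ℝ {X, U} ∧
    LinearMap.ker (S + LinearMap.id) = Submodule.span ℝ {I X, I U} := by
  have hsym := hg.isSymm
  have hspan := span_null_frame_eq_top hg.finrank_eq_four hsym hI hIg hXnull hUnull hXU hIXU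
  have hSU := apply_eq_self_of_skew_of_anticomm hg.separatingLeft hsym hI hIg hspan hUnull hXU
    hSskew hSanti hSX
  have hSIX := LinearMap.apply_map_eq_neg_of_apply_eq_self hSanti hSX
  have hSIU := LinearMap.apply_map_eq_neg_of_apply_eq_self hSanti hSU
  have hP : Submodule.span ℝ {X, U} ≤ LinearMap.ker (S - LinearMap.id) := by
    simp [Submodule.span_le, Set.insert_subset_iff, hSX, hSU]
  have hQ : Submodule.span ℝ {I X, I U} ≤ LinearMap.ker (S + LinearMap.id) := by
    simp [Submodule.span_le, Set.insert_subset_iff, hSIX, hSIU]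
  have hPQ : Submodule.span ℝ {X, U} ⊔ Submodule.span ℝ {I X, I U} = ⊤ := by
    rwa [← Submodule.span_union, Set.insert_union, Set.singleton_union]
  obtain ⟨hker_one, hker_neg_one⟩ := LinearMap.ker_sub_id_eq_and_ker_add_id_eq hP hQ hPQ
  refine ⟨fun u hu => ?_, fun u hu => ?_, hker_one, hker_neg_one⟩
  · simpa [sub_eq_zero] using hP hu
  · simpa [add_eq_zero_iff_eq_neg] using hQ hu

/-- Uniqueness part of Lemma `S`: if `S` is `g`-skew-symmetric with `S² = id`,
`IS = -SI` and `SX = X`, where `X` is a nonzero null vector and `U` is a null vector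
with `g(X,U) = 0` and `g(IX,U) = 2`, then `S = id` on `span{X,U}` and `S = -id` on
`span{IX,IU}`; i.e. the `(+1)`-eigenspace of `S` is `span{X,U}` and the
`(-1)`-eigenspace is `span{IX,IU}`. -/
theorem eigenspaces_of_S_are_spans {V : Type*} [AddCommGroup V] [Module ℝ V]
    (g : V →ₗ[ℝ] V →ₗ[ℝ] ℝ) (hg : IsNeutral g)
    (I : V →ₗ[ℝ] V) (hI : ∀ v, I (I v) = -v)
    (hIg : ∀ u v, g (I u) (I v) = g u v)
    (X : V) (hX : X ≠ 0) (hXnull : g X X = 0)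
    (U : V) (hUnull : g U U = 0) (hXU : g X U = 0) (hIXU : g (I X) U = 2)
    (S : V →ₗ[ℝ] V)
    (hSskew : ∀ u v, g (S u) v = - g u (S v))
    (hS2 : ∀ v, S (S v) = v)
    (hSanti : ∀ v, I (S v) = - S (I v))
    (hSX : S X = X) :
    (∀ u ∈ Submodule.span ℝ {X, U}, S u = u) ∧
    (∀ u ∈ Submodule.span ℝ {I X, I U}, S u = -u) ∧
    LinearMap.ker (S - LinearMap.id) = Submodule.span ℝ {X, U} ∧
    LinearMap.ker (S + LinearMap.id) = Submodule.span ℝ {I X, I U} :=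
  eigenspaces_of_S_are_spans_general g hg I hI hIg X hXnull U hUnull hXU hIXU S hSskew hSanti hSX
end

section
/- Let V be a 4-dimensional real vector space and I a complex structure on V. Suppose Ω is a complex-valued alternating 2-form on V of type (2,0) with respect to I (i.e., Ω(Iu,v) = i·Ω(u,v) for all u,v) and ω is a nondegenerate real alternating 2-form on V such that Ω∧Ω̄ = −2 ω∧ω and Ω∧ω = 0. Then ω is of type (1,1) with respect to I, i.e., ω(Iu,Iv) = ω(u,v) for all u,v ∈ V. -/
open Module

/-- The wedge product of two complex-valued (alternating) 2-forms, as a 4-form: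
the sum over the (2,2)-shuffles with signs. -/
def wedgeC {V : Type*} (φ ψ : V → V → ℂ) (v₁ v₂ v₃ v₄ : V) : ℂ :=
  φ v₁ v₂ * ψ v₃ v₄ - φ v₁ v₃ * ψ v₂ v₄ + φ v₁ v₄ * ψ v₂ v₃
    + φ v₂ v₃ * ψ v₁ v₄ - φ v₂ v₄ * ψ v₁ v₃ + φ v₃ v₄ * ψ v₁ v₂

/-- Remark after Lemma 2: if `Ω` is a `(2,0)`-form w.r.t. a complex structure `I` on a
4-dimensional real vector space and `ω` is a nondegenerate real alternating 2-form with
`Ω ∧ Ω̄ = -2 ω²` and `Ω ∧ ω = 0`, then `ω` is of type `(1,1)` w.r.t. `I`. -/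
theorem omega_is_type_one_one {V : Type*} [AddCommGroup V] [Module ℝ V]
    (hdim : finrank ℝ V = 4)
    (I : V →ₗ[ℝ] V) (hI : ∀ v, I (I v) = -v)
    (Ω : V →ₗ[ℝ] V →ₗ[ℝ] ℂ) (ω : V →ₗ[ℝ] V →ₗ[ℝ] ℝ)
    (haltΩ : ∀ v, Ω v v = 0)
    (h20 : ∀ u v, Ω (I u) v = Complex.I * Ω u v)
    (haltω : ∀ v, ω v v = 0)
    (hnd : ∀ u, (∀ v, ω u v = 0) → u = 0)
    (hΩΩ : ∀ v₁ v₂ v₃ v₄,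
      wedgeC (fun u v => Ω u v) (fun u v => starRingEnd ℂ (Ω u v)) v₁ v₂ v₃ v₄
        = -2 * wedgeC (fun u v => (ω u v : ℂ)) (fun u v => (ω u v : ℂ)) v₁ v₂ v₃ v₄)
    (hΩω : ∀ v₁ v₂ v₃ v₄,
      wedgeC (fun u v => Ω u v) (fun u v => (ω u v : ℂ)) v₁ v₂ v₃ v₄ = 0) :
    ∀ u v, ω (I u) (I v) = ω u v := by
  have hfd : FiniteDimensional ℝ V := FiniteDimensional.of_finrank_eq_succ hdim
  have hskewω : ∀ u v, ω v u = -ω u v := by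
    intro u v
    have h := haltω (u + v)
    simp [haltω] at h
    linarith
  have hskewΩ : ∀ u v, Ω v u = -Ω u v := by
    intro u v
    have h := haltΩ (u + v)
    simp [haltΩ] at h
    linear_combination h
  have h02 : ∀ u v, Ω u (I v) = Complex.I * Ω u v := by
    intro u v
    linear_combination hskewΩ u (I v) - h20 v u - Complex.I * hskewΩ u v
  -- Step 1: Ω is not identically zero.
  have hΩne : ∃ a b, Ω a b ≠ 0 := by
    by_contra h
    push_neg at h
    -- then ω ∧ ω = 0 pointwise
    have hww : ∀ v₁ v₂ v₃ v₄ : V,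
        ω v₁ v₂ * ω v₃ v₄ - ω v₁ v₃ * ω v₂ v₄ + ω v₁ v₄ * ω v₂ v₃ = 0 := by
      intro v₁ v₂ v₃ v₄
      have h0 := hΩΩ v₁ v₂ v₃ v₄
      simp only [wedgeC, h, map_zero] at h0
      have : ((ω v₁ v₂ * ω v₃ v₄ - ω v₁ v₃ * ω v₂ v₄ + ω v₁ v₄ * ω v₂ v₃ : ℝ) : ℂ) = 0 := by
        push_cast
        linear_combination (1/4 : ℂ) * h0
      exact_mod_cast this
    -- nondegeneracy gives a pair with ω a b = 1
    have : Nontrivial V := Module.nontrivial_of_finrank_eq_succ hdim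
    obtain ⟨a, ha⟩ := exists_ne (0 : V)
    have : ¬ (∀ v, ω a v = 0) := fun hv => ha (hnd a hv)
    push_neg at this
    obtain ⟨b0, hb0⟩ := this
    set b := (ω a b0)⁻¹ • b0 with hb
    have hab : ω a b = 1 := by
      simp [hb, inv_mul_cancel₀ hb0]
    -- projection
    set P : V → V := fun v => v - ω a v • b + ω b v • a with hP
    have hPa : ∀ v, ω a (P v) = 0 := by
      intro v
      simp [hP, hab, haltω]
    have hPb : ∀ v, ω b (P v) = 0 := by
      intro v
      have : ω b a = -1 := by rw [hskewω a b, hab]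
      simp [hP, this, haltω]
    have hPP : ∀ u v, ω (P u) (P v) = 0 := by
      intro u v
      have h0 := hww a b (P u) (P v)
      simp only [hPa, hPb, hab] at h0
      linarith [h0]
    have hPzero : ∀ v, P v = 0 := by
      intro v
      refine hnd _ (fun w => ?_)
      have hw : w = P w + ω a w • b - ω b w • a := by simp [hP]; abel
      rw [hw]
      have h1 : ω (P v) (P w) = 0 := hPP v w
      have h2 : ω (P v) b = 0 := by rw [hskewω b (P v), hPb]; ring
      have h3 : ω (P v) a = 0 := by rw [hskewω a (P v), hPa]; ring
      simp [h1, h2, h3]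
    -- so V = span {a, b}, contradicting finrank = 4
    have hspan : Submodule.span ℝ (Set.range ![a, b]) = ⊤ := by
      rw [Submodule.eq_top_iff']
      intro v
      have h0 := hPzero v
      have hv : v = ω a v • b - ω b v • a := by
        rw [hP] at h0
        simp only at h0
        linear_combination (norm := module) h0
      rw [hv]
      exact Submodule.sub_mem _
        (Submodule.smul_mem _ _ (Submodule.subset_span ⟨1, rfl⟩))
        (Submodule.smul_mem _ _ (Submodule.subset_span ⟨0, rfl⟩))
    have hle := finrank_le_of_span_eq_top hspan
    simp [hdim] at hle
  obtain ⟨a, b, hz⟩ := hΩne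
  -- values of Ω on the quadruple a, I a, b, I b
  have hΩaIa : Ω a (I a) = 0 := by rw [h02, haltΩ, mul_zero]
  have hΩbIb : Ω b (I b) = 0 := by rw [h02, haltΩ, mul_zero]
  have hΩaIb : Ω a (I b) = Complex.I * Ω a b := h02 a b
  have hΩIab : Ω (I a) b = Complex.I * Ω a b := h20 a b
  have hΩIaIb : Ω (I a) (I b) = -Ω a b := by
    rw [h20, h02]
    linear_combination Ω a b * Complex.I_mul_I
  -- linear independence of a, I a, b, I b
  have hli : LinearIndependent ℝ ![a, I a, b, I b] := by
    rw [Fintype.linearIndependent_iff]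
    intro g hg
    have hsum : g 0 • a + g 1 • I a + g 2 • b + g 3 • I b = 0 := by
      have := hg
      simpa [Fin.sum_univ_four] using this
    have e1 : ((g 0 : ℂ) + (g 1 : ℂ) * Complex.I) * Ω a b = 0 := by
      have h := congrArg (fun x => Ω x b) hsum
      simp only [map_add, map_smul, LinearMap.add_apply, LinearMap.smul_apply,
        map_zero, LinearMap.zero_apply, h20, smul_eq_mul] at h
      rw [haltΩ] at h
      simp only [Complex.real_smul, smul_zero, mul_zero] at h
      linear_combination h
    have e2 : ((g 2 : ℂ) + (g 3 : ℂ) * Complex.I) * Ω a b = 0 := by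
      have h := congrArg (fun x => Ω a x) hsum
      simp only [map_add, map_smul, map_zero] at h
      rw [haltΩ, hΩaIa, h02] at h
      simp only [Complex.real_smul, smul_zero, mul_zero] at h
      linear_combination h
    have e1' := (mul_eq_zero.mp e1).resolve_right hz
    have e2' := (mul_eq_zero.mp e2).resolve_right hz
    rw [Complex.ext_iff] at e1' e2'
    simp only [Complex.add_re, Complex.add_im, Complex.ofReal_re, Complex.ofReal_im,
      Complex.mul_re, Complex.mul_im, Complex.I_re, Complex.I_im, Complex.zero_re,
      Complex.zero_im] at e1' e2'
    obtain ⟨k0, k1⟩ := e1'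
    obtain ⟨k2, k3⟩ := e2'
    have g0 : g 0 = 0 := by linarith
    have g1 : g 1 = 0 := by linarith
    have g2 : g 2 = 0 := by linarith
    have g3 : g 3 = 0 := by linarith
    intro i
    fin_cases i <;> first | exact g0 | exact g1 | exact g2 | exact g3
  -- the key relations from Ω ∧ ω = 0
  have key := hΩω a (I a) b (I b)
  simp only [wedgeC] at key
  rw [hΩaIa, hΩbIb, hΩaIb, hΩIab, hΩIaIb] at key
  have key2 : (((ω a b - ω (I a) (I b) : ℝ) : ℂ)
      + ((ω (I a) b + ω a (I b) : ℝ) : ℂ) * Complex.I) * Ω a b = 0 := by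
    push_cast
    linear_combination key
  have key3 := (mul_eq_zero.mp key2).resolve_right hz
  rw [Complex.ext_iff] at key3
  simp only [Complex.add_re, Complex.add_im, Complex.ofReal_re, Complex.ofReal_im,
    Complex.mul_re, Complex.mul_im, Complex.I_re, Complex.I_im, Complex.zero_re,
    Complex.zero_im] at key3
  obtain ⟨k1, k2⟩ := key3
  have ht : ω (I a) (I b) = ω a b := by linarith
  have hu : ω (I a) b = -(ω a (I b)) := by linarith
  -- build a basis
  have hcard : Fintype.card (Fin 4) = finrank ℝ V := by simp [hdim]
  let e : Basis (Fin 4) ℝ V := basisOfLinearIndependentOfCardEqFinrank hli hcard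
  have he : ⇑e = ![a, I a, b, I b] := coe_basisOfLinearIndependentOfCardEqFinrank hli hcard
  have hD : ω.compl₁₂ I I = ω := by
    refine e.ext fun i => e.ext fun j => ?_
    rw [LinearMap.compl₁₂_apply]
    have hei : e i = ![a, I a, b, I b] i := by rw [he]
    have hej : e j = ![a, I a, b, I b] j := by rw [he]
    rw [hei, hej]
    fin_cases i <;> fin_cases j <;>
      simp [hI] <;>
      linarith [ht, hu, haltω a, haltω b, haltω (I a), haltω (I b),
        hskewω a b, hskewω a (I a), hskewω a (I b), hskewω (I a) b,
        hskewω (I a) (I b), hskewω b (I b), hskewω (I b) (I a), hskewω b (I a),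
        hskewω b a, hskewω (I a) a, hskewω (I b) a, hskewω (I b) b]
  intro u v
  have h1 := LinearMap.congr_fun hD u
  have h2 := LinearMap.congr_fun h1 v
  rw [LinearMap.compl₁₂_apply] at h2
  exact h2
end

section
/- Let 𝔤 be the 4-dimensional real Lie algebra with basis X₀, X₁, X₂, X₃ whose Lie bracket satisfies [X₀,Xᵢ] = 0 for i = 1,2,3 and [X₁,X₂] = X₃, [X₂,X₃] = X₁, [X₃,X₁] = X₂ (so 𝔤 ≅ ℝ ⊕ su(2), the Lie algebra of S¹ × SU(2) = S¹ × S³). Let g be a nondegenerate symmetric bilinear form on 𝔤. If X, Y ∈ 𝔤 satisfy g(X,X) = g(Y,Y) = g(X,Y) = 0, [X,Y] = 0, and the Killing condition g([X,B],C) + g([X,C],B) = 0 and g([Y,B],C) + g([Y,C],B) = 0 for all B, C ∈ 𝔤, then X and Y are linearly dependent. -/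
private lemma su2_core {L : Type*} [LieRing L] [LieAlgebra ℝ L]
    (b : Module.Basis (Fin 4) ℝ L)
    (hcentral : ∀ i, ⁅b 0, b i⁆ = 0)
    (h12 : ⁅b 1, b 2⁆ = b 3) (h23 : ⁅b 2, b 3⁆ = b 1) (h31 : ⁅b 3, b 1⁆ = b 2)
    (g : L →ₗ[ℝ] L →ₗ[ℝ] ℝ)
    (hsymm : ∀ u v, g u v = g v u)
    (hnd : ∀ u, (∀ v, g u v = 0) → u = 0)
    (X Y : L)
    (hXX : g X X = 0) (hYY : g Y Y = 0) (hXY : g X Y = 0)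
    (hcomm : ⁅X, Y⁆ = 0)
    (hXkill : ∀ B C, g ⁅X, B⁆ C + g ⁅X, C⁆ B = 0)
    (hx : b.repr X 1 ≠ 0 ∨ b.repr X 2 ≠ 0 ∨ b.repr X 3 ≠ 0) :
    ∃ μ : ℝ, Y = μ • X := by
  set x : Fin 4 → ℝ := fun i => b.repr X i with hxdef
  set y : Fin 4 → ℝ := fun i => b.repr Y i with hydef
  have hx' : x 1 ≠ 0 ∨ x 2 ≠ 0 ∨ x 3 ≠ 0 := hx
  clear hx
  -- multiplication table
  have hc0 : ∀ i, ⁅b i, b 0⁆ = 0 := fun i => by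
    rw [← lie_skew, hcentral]; simp
  have h21 : ⁅b 2, b 1⁆ = -b 3 := by rw [← lie_skew, h12]
  have h32 : ⁅b 3, b 2⁆ = -b 1 := by rw [← lie_skew, h23]
  have h13 : ⁅b 1, b 3⁆ = -b 2 := by rw [← lie_skew, h31]
  have hXe : X = x 0 • b 0 + x 1 • b 1 + x 2 • b 2 + x 3 • b 3 := by
    have := b.sum_repr X
    rw [Fin.sum_univ_four] at this
    exact this.symm
  have hYe : Y = y 0 • b 0 + y 1 • b 1 + y 2 • b 2 + y 3 • b 3 := by
    have := b.sum_repr Y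
    rw [Fin.sum_univ_four] at this
    exact this.symm
  have hbr : (x 2 * y 3 - x 3 * y 2) • b 1 + (x 3 * y 1 - x 1 * y 3) • b 2
      + (x 1 * y 2 - x 2 * y 1) • b 3 = 0 := by
    rw [← hcomm, hXe, hYe]
    simp only [lie_add, add_lie, lie_smul, smul_lie, lie_self, h12, h23, h31, h21, h32, h13,
      hcentral, hc0, smul_zero, zero_add, add_zero, smul_smul, smul_neg]
    module
  have hco : ∀ j : Fin 4, ((x 2 * y 3 - x 3 * y 2) • b.repr (b 1) + (x 3 * y 1 - x 1 * y 3) • b.repr (b 2)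
      + (x 1 * y 2 - x 2 * y 1) • b.repr (b 3)) j = 0 := by
    intro j
    have h := congrArg b.repr hbr
    simp only [map_add, map_smul, map_zero] at h
    rw [h]; rfl
  have e1 : x 2 * y 3 - x 3 * y 2 = 0 := by simpa [Module.Basis.repr_self, Finsupp.single_apply] using hco 1
  have e2 : x 3 * y 1 - x 1 * y 3 = 0 := by simpa [Module.Basis.repr_self, Finsupp.single_apply] using hco 2
  have e3 : x 1 * y 2 - x 2 * y 1 = 0 := by simpa [Module.Basis.repr_self, Finsupp.single_apply] using hco 3
  obtain ⟨μ, hy1, hy2, hy3⟩ : ∃ μ : ℝ, y 1 = μ * x 1 ∧ y 2 = μ * x 2 ∧ y 3 = μ * x 3 := by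
    rcases hx' with h | h | h
    · refine ⟨y 1 / x 1, by field_simp, ?_, ?_⟩
      · rw [div_mul_eq_mul_div, eq_div_iff h]; linear_combination e3
      · rw [div_mul_eq_mul_div, eq_div_iff h]; linear_combination -e2
    · refine ⟨y 2 / x 2, ?_, by field_simp, ?_⟩
      · rw [div_mul_eq_mul_div, eq_div_iff h]; linear_combination -e3
      · rw [div_mul_eq_mul_div, eq_div_iff h]; linear_combination e1
    · refine ⟨y 3 / x 3, ?_, ?_, by field_simp⟩
      · rw [div_mul_eq_mul_div, eq_div_iff h]; linear_combination e2
      · rw [div_mul_eq_mul_div, eq_div_iff h]; linear_combination -e1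
  set c : ℝ := y 0 - μ * x 0 with hcdef
  have hZ : Y = μ • X + c • b 0 := by
    apply b.repr.injective
    ext j
    fin_cases j <;>
      simp [map_add, map_smul, Module.Basis.repr_self, Finsupp.single_apply, hy1, hy2, hy3, hcdef,
        ← hxdef, ← hydef]
  by_cases hc : c = 0
  · exact ⟨μ, by rw [hZ, hc, zero_smul, add_zero]⟩
  exfalso
  have hYX : g Y X = 0 := (hsymm Y X).trans hXY
  have hZ' : c • b 0 = Y - μ • X := by rw [hZ]; abel
  have g00 : g (b 0) (b 0) = 0 := by
    have h : g (c • b 0) (c • b 0) = 0 := by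
      rw [hZ']
      simp only [map_sub, map_smul, LinearMap.sub_apply, LinearMap.smul_apply, smul_eq_mul,
        hXX, hYY, hXY, hYX]
      ring
    simp only [map_smul, LinearMap.smul_apply, smul_eq_mul] at h
    rcases mul_eq_zero.mp h with h | h
    · exact absurd h hc
    rcases mul_eq_zero.mp h with h | h
    · exact absurd h hc
    · exact h
  have gb0X : g (b 0) X = 0 := by
    have h : g (c • b 0) X = 0 := by
      rw [hZ']
      simp only [map_sub, map_smul, LinearMap.sub_apply, LinearMap.smul_apply, smul_eq_mul,
        hXX, hYX]
      ring
    simp only [map_smul, LinearMap.smul_apply, smul_eq_mul] at h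
    rcases mul_eq_zero.mp h with h | h
    · exact absurd h hc
    · exact h
  have hXb0 : ⁅X, b 0⁆ = 0 := by
    rw [hXe]
    simp [add_lie, smul_lie, hc0]
  have hperp : ∀ C, g ⁅X, C⁆ (b 0) = 0 := by
    intro C
    have h := hXkill (b 0) C
    rw [hXb0] at h
    simpa only [map_zero, LinearMap.zero_apply, zero_add] using h
  have hXb1 : ⁅X, b 1⁆ = x 3 • b 2 - x 2 • b 3 := by
    rw [hXe]
    simp only [add_lie, smul_lie, lie_self, hcentral, h21, h31, smul_zero, smul_neg]
    module
  have hXb2 : ⁅X, b 2⁆ = x 1 • b 3 - x 3 • b 1 := by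
    rw [hXe]
    simp only [add_lie, smul_lie, lie_self, hcentral, h12, h32, smul_zero, smul_neg]
    module
  have hXb3 : ⁅X, b 3⁆ = x 2 • b 1 - x 1 • b 2 := by
    rw [hXe]
    simp only [add_lie, smul_lie, lie_self, hcentral, h23, h13, smul_zero, smul_neg]
    module
  have k1 : x 3 * g (b 0) (b 2) - x 2 * g (b 0) (b 3) = 0 := by
    have h := hperp (b 1)
    rw [hXb1] at h
    simp only [map_sub, map_smul, LinearMap.sub_apply, LinearMap.smul_apply, smul_eq_mul] at h
    rw [hsymm (b 2) (b 0), hsymm (b 3) (b 0)] at h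
    linarith [h]
  have k2 : x 1 * g (b 0) (b 3) - x 3 * g (b 0) (b 1) = 0 := by
    have h := hperp (b 2)
    rw [hXb2] at h
    simp only [map_sub, map_smul, LinearMap.sub_apply, LinearMap.smul_apply, smul_eq_mul] at h
    rw [hsymm (b 3) (b 0), hsymm (b 1) (b 0)] at h
    linarith [h]
  have k3 : x 2 * g (b 0) (b 1) - x 1 * g (b 0) (b 2) = 0 := by
    have h := hperp (b 3)
    rw [hXb3] at h
    simp only [map_sub, map_smul, LinearMap.sub_apply, LinearMap.smul_apply, smul_eq_mul] at h
    rw [hsymm (b 1) (b 0), hsymm (b 2) (b 0)] at h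
    linarith [h]
  have sum1 : x 1 * g (b 0) (b 1) + x 2 * g (b 0) (b 2) + x 3 * g (b 0) (b 3) = 0 := by
    have h := gb0X
    rw [hXe] at h
    simp only [map_add, map_smul, LinearMap.smul_apply, smul_eq_mul] at h
    rw [g00] at h
    linarith [h]
  have hs : x 1 ^ 2 + x 2 ^ 2 + x 3 ^ 2 ≠ 0 := by
    rcases hx' with h | h | h <;> positivity
  have G1 : g (b 0) (b 1) = 0 := by
    have h : g (b 0) (b 1) * (x 1 ^ 2 + x 2 ^ 2 + x 3 ^ 2) = 0 := by
      linear_combination x 1 * sum1 + x 2 * k3 - x 3 * k2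
    rcases mul_eq_zero.mp h with h | h
    · exact h
    · exact absurd h hs
  have G2 : g (b 0) (b 2) = 0 := by
    have h : g (b 0) (b 2) * (x 1 ^ 2 + x 2 ^ 2 + x 3 ^ 2) = 0 := by
      linear_combination x 2 * sum1 - x 1 * k3 + x 3 * k1
    rcases mul_eq_zero.mp h with h | h
    · exact h
    · exact absurd h hs
  have G3 : g (b 0) (b 3) = 0 := by
    have h : g (b 0) (b 3) * (x 1 ^ 2 + x 2 ^ 2 + x 3 ^ 2) = 0 := by
      linear_combination x 3 * sum1 + x 1 * k2 - x 2 * k1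
    rcases mul_eq_zero.mp h with h | h
    · exact h
    · exact absurd h hs
  have hmap : (g (b 0) : L →ₗ[ℝ] ℝ) = 0 := by
    apply b.ext
    intro j
    fin_cases j
    · simpa using g00
    · simpa using G1
    · simpa using G2
    · simpa using G3
  have hb0 : b 0 = 0 := hnd (b 0) (fun v => by rw [hmap]; rfl)
  exact b.ne_zero 0 hb0

/-- Remark at the end of Section 4: on the Lie algebra `ℝ ⊕ su(2)` of `S¹ × SU(2)`
(presented by a basis `X₀, X₁, X₂, X₃` with `X₀` central and `[X₁,X₂] = X₃`,
`[X₂,X₃] = X₁`, `[X₃,X₁] = X₂`), for any nondegenerate symmetric bilinear form `g`,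
two commuting elements `X, Y` that are `g`-null, `g`-orthogonal and satisfy the Killing
condition for `g` must be linearly dependent. -/
theorem su2_plus_R_null_killing_dependent {L : Type*} [LieRing L] [LieAlgebra ℝ L]
    (b : Module.Basis (Fin 4) ℝ L)
    (hcentral : ∀ i, ⁅b 0, b i⁆ = 0)
    (h12 : ⁅b 1, b 2⁆ = b 3) (h23 : ⁅b 2, b 3⁆ = b 1) (h31 : ⁅b 3, b 1⁆ = b 2)
    (g : L →ₗ[ℝ] L →ₗ[ℝ] ℝ)
    (hsymm : ∀ u v, g u v = g v u)
    (hnd : ∀ u, (∀ v, g u v = 0) → u = 0)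
    (X Y : L)
    (hXX : g X X = 0) (hYY : g Y Y = 0) (hXY : g X Y = 0)
    (hcomm : ⁅X, Y⁆ = 0)
    (hXkill : ∀ B C, g ⁅X, B⁆ C + g ⁅X, C⁆ B = 0)
    (hYkill : ∀ B C, g ⁅Y, B⁆ C + g ⁅Y, C⁆ B = 0) :
    ¬ LinearIndependent ℝ ![X, Y] := by
  intro hind
  rw [LinearIndependent.pair_iff] at hind
  by_cases hx : b.repr X 1 ≠ 0 ∨ b.repr X 2 ≠ 0 ∨ b.repr X 3 ≠ 0
  · obtain ⟨μ, hY⟩ := su2_core b hcentral h12 h23 h31 g hsymm hnd X Y hXX hYY hXY hcomm hXkill hx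
    have h := hind μ (-1) (by rw [hY]; module)
    norm_num at h
  by_cases hy : b.repr Y 1 ≠ 0 ∨ b.repr Y 2 ≠ 0 ∨ b.repr Y 3 ≠ 0
  · have hYX : g Y X = 0 := (hsymm Y X).trans hXY
    have hcomm' : ⁅Y, X⁆ = 0 := by rw [← lie_skew, hcomm, neg_zero]
    obtain ⟨μ, hX⟩ := su2_core b hcentral h12 h23 h31 g hsymm hnd Y X hYY hXX hYX hcomm' hYkill hy
    have h := hind (-1) μ (by rw [hX]; module)
    norm_num at h
  push_neg at hx hy
  -- X and Y are both multiples of b 0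
  obtain ⟨a, hXe⟩ : ∃ a : ℝ, X = a • b 0 := by
    refine ⟨b.repr X 0, ?_⟩
    have h := b.sum_repr X
    rw [Fin.sum_univ_four, hx.1, hx.2.1, hx.2.2] at h
    conv_lhs => rw [← h]
    module
  obtain ⟨d, hYe⟩ : ∃ d : ℝ, Y = d • b 0 := by
    refine ⟨b.repr Y 0, ?_⟩
    have h := b.sum_repr Y
    rw [Fin.sum_univ_four, hy.1, hy.2.1, hy.2.2] at h
    conv_lhs => rw [← h]
    module
  have h := hind d (-a) (by rw [hXe, hYe]; module)
  have hX0 : X = 0 := by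
    have : a = 0 := by have := h.2; linarith
    rw [hXe, this, zero_smul]
  have h2 := hind 1 0 (by rw [hX0]; module)
  norm_num at h2
end
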